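/- arXiv:1804.10913 — 10 statements merged into one kernel-verified Lean document; each statement's English description precedes it below -/
import Mathlib

section
/- Let H be a monoid and X a finite subset of H containing at least one unit of H. If X is a unit of P_{fin,×}(H), then X is a singleton {u} with u ∈ H^×. Conversely, every singleton {u} with u ∈ H^× is a unit of P_{fin,×}(H). Hence the units of P_{fin,×}(H) are exactly the singletons of units of H. -/
open Pointwise

theorem units_of_restricted_power_monoid {H : Type*} [Monoid H] [DecidableEq H]
    (X : Finset H) (hX : ∃ x ∈ X, IsUnit x) :
    (∃ Y : Finset H, (∃ y ∈ Y, IsUnit y) ∧ X * Y = {1} ∧ Y * X = {1}) ↔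
      ∃ u : H, IsUnit u ∧ X = {u} := by
  constructor
  · rintro ⟨Y, ⟨y0, hy0, _⟩, hXY, hYX⟩
    obtain ⟨x0, hx0, _⟩ := hX
    have hr : ∀ x ∈ X, x * y0 = 1 := fun x hx => by
      have := Finset.mul_mem_mul hx hy0
      rw [hXY, Finset.mem_singleton] at this; exact this
    have hl : ∀ x ∈ X, y0 * x = 1 := fun x hx => by
      have := Finset.mul_mem_mul hy0 hx
      rw [hYX, Finset.mem_singleton] at this; exact this
    refine ⟨x0, ⟨⟨x0, y0, hr x0 hx0, hl x0 hx0⟩, rfl⟩, ?_⟩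
    rw [Finset.eq_singleton_iff_unique_mem]
    refine ⟨hx0, fun x hx => ?_⟩
    calc x = x * (y0 * x0) := by rw [hl x0 hx0, mul_one]
      _ = (x * y0) * x0 := by rw [mul_assoc]
      _ = x0 := by rw [hr x hx, one_mul]
  · rintro ⟨u, hu, rfl⟩
    obtain ⟨v, hv⟩ := hu
    exact ⟨{(↑v⁻¹ : H)}, ⟨_, Finset.mem_singleton_self _, v⁻¹.isUnit⟩,
      by rw [Finset.singleton_mul_singleton, ← hv, Units.mul_inv],
      by rw [Finset.singleton_mul_singleton, ← hv, Units.inv_mul]⟩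
end

section
/- Let H be a monoid and x ∈ H with x ≠ 1_H. The two-element set {1_H, x} is an atom (irreducible element) of the reduced power monoid P_{fin,1}(H) if and only if x² ≠ 1_H and x² ≠ x. -/
/-!
If `x ^ 2 ∈ {1, x}`, then `{1, x}` is idempotent, so `{1, x} = {1, x} * {1, x}` is a nontrivial
factorisation. Conversely, both factors of `Y * Z = {1, x}` contain `1`, hence lie inside
`{1, x}`; they cannot both contain `x` since `x * x ∉ {1, x}`, and a factor without `x` is `{1}`.
-/

open Pointwise

namespace Finset

theorem eq_singleton_of_subset_pair {α : Type*} [DecidableEq α] {s : Finset α} {a b : α}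
    (ha : a ∈ s) (hb : b ∉ s) (hs : s ⊆ {a, b}) : s = {a} := by
  rw [pair_comm, subset_insert_iff_of_notMem hb] at hs
  exact (Nonempty.subset_singleton_iff ⟨a, ha⟩).mp hs

variable {M : Type*} [Monoid M] [DecidableEq M]

theorem pair_one_mul_self {x : M} (hsq : x ^ 2 ∈ ({1, x} : Finset M)) :
    ({1, x} : Finset M) * {1, x} = {1, x} := by
  refine (mul_subset_iff.2 ?_).antisymm (subset_mul_left _ (mem_insert_self 1 {x}))
  rw [pow_two] at hsq
  simp only [mem_insert, mem_singleton]
  rintro a (rfl | rfl) b (rfl | rfl) <;> simp_all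

theorem eq_one_or_eq_one_of_mul_eq_pair {x : M} {s t : Finset M} (hs : 1 ∈ s) (ht : 1 ∈ t)
    (hsq : x ^ 2 ∉ ({1, x} : Finset M)) (hst : s * t = {1, x}) : s = {1} ∨ t = {1} := by
  by_cases hxs : x ∈ s
  · refine .inr (eq_singleton_of_subset_pair (b := x) ht (fun hxt => hsq ?_) ?_)
    · exact hst ▸ pow_two x ▸ mul_mem_mul hxs hxt
    · exact hst ▸ subset_mul_right t hs
  · exact .inl (eq_singleton_of_subset_pair hs hxs (hst ▸ subset_mul_left s ht))

end Finset

theorem pair_atom_iff {H : Type*} [Monoid H] [DecidableEq H]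
    (x : H) (hx : x ≠ 1) :
    (({(1 : H), x} : Finset H) ≠ {1} ∧
      ∀ Y Z : Finset H, (1 : H) ∈ Y → (1 : H) ∈ Z →
        ({(1 : H), x} : Finset H) = Y * Z → Y = {1} ∨ Z = {1}) ↔
    (x ^ 2 ≠ 1 ∧ x ^ 2 ≠ x) := by
  have hsq_mem : x ^ 2 ∈ ({1, x} : Finset H) ↔ x ^ 2 = 1 ∨ x ^ 2 = x := by simp
  constructor
  · rintro ⟨hne, hatom⟩
    refine not_or.mp fun hsq => hne ?_
    have hone : (1 : H) ∈ ({1, x} : Finset H) := Finset.mem_insert_self 1 {x}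
    exact (hatom _ _ hone hone (Finset.pair_one_mul_self (hsq_mem.mpr hsq)).symm).elim id id
  · intro hsq
    have hx_mem : x ∈ ({1, x} : Finset H) := by simp
    refine ⟨fun h => hx (Finset.mem_singleton.mp (h ▸ hx_mem)), fun Y Z hY hZ hYZ => ?_⟩
    exact Finset.eq_one_or_eq_one_of_mul_eq_pair hY hZ (hsq_mem.not.mpr (not_or.mpr hsq)) hYZ.symm
end

section
/- Let H be a monoid and x ∈ H \ {1_H} with x² = 1_H or x² = x. Then {1_H, x} cannot be written as a product of atoms in P_{fin,1}(H); in fact, the only way to write {1_H, x} as a product of two non-unit elements of P_{fin,1}(H) is {1_H, x} = {1_H, x}·{1_H, x}. -/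
open Pointwise

/-- `A` is an atom of the reduced power monoid `P_{fin,1}(H)`. -/
def IsAtomPow1 {H : Type*} [Monoid H] [DecidableEq H] (A : Finset H) : Prop :=
  (1 : H) ∈ A ∧ A ≠ {1} ∧
    ∀ Y Z : Finset H, (1 : H) ∈ Y → (1 : H) ∈ Z → A = Y * Z → Y = {1} ∨ Z = {1}

/-!
Since `x² ∈ {1, x}`, the set `P = {1, x}` satisfies `P * P = P`, which already shows that `P` is
not an atom. If `P = Y * Z` with `1 ∈ Y, Z`, then `Y, Z ⊆ P`, so each non-unit factor is `P`
itself. Applied to the first factor of an atomic factorization of length at least two, this again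
makes `P` an atom.
-/

section
variable {H : Type*} [Monoid H] [DecidableEq H]

theorem Finset.pair_mul_pair_eq_pair {x : H} (h : x ^ 2 = 1 ∨ x ^ 2 = x) :
    ({1, x} : Finset H) * {1, x} = {1, x} := by
  refine (subset_mul_left _ (by simp)).antisymm' (mul_subset_iff.2 ?_)
  simp only [mem_insert, mem_singleton]
  rintro y (rfl | rfl) z (rfl | rfl) <;> simp [← sq, h]

theorem Finset.eq_pair_of_one_mem_of_subset {x : H} {Y : Finset H} (h1 : 1 ∈ Y) (hY : Y ≠ {1})
    (hsub : Y ⊆ {1, x}) : Y = {1, x} := by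
  refine hsub.antisymm (insert_subset h1 (singleton_subset_iff.2 ?_))
  by_contra hx
  exact hY (eq_singleton_iff_unique_mem.2 ⟨h1, fun b hb => by grind⟩)

theorem Finset.eq_pair_of_mul_eq_pair {x : H} {Y Z : Finset H} (hY : 1 ∈ Y) (hZ : 1 ∈ Z)
    (hY1 : Y ≠ {1}) (hZ1 : Z ≠ {1}) (hYZ : Y * Z = {1, x}) : Y = {1, x} ∧ Z = {1, x} :=
  ⟨eq_pair_of_one_mem_of_subset hY hY1 (hYZ ▸ subset_mul_left Y hZ),
    eq_pair_of_one_mem_of_subset hZ hZ1 (hYZ ▸ subset_mul_right Z hY)⟩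

theorem Finset.one_mem_list_prod {L : List (Finset H)} (hL : ∀ A ∈ L, (1 : H) ∈ A) :
    (1 : H) ∈ L.prod := by
  induction L with
  | nil => simp
  | cons A L ih =>
    rw [List.prod_cons, ← one_mul (1 : H)]
    exact mul_mem_mul (hL A List.mem_cons_self) (ih fun B hB => hL B (.tail A hB))

theorem not_isAtomPow1_of_mul_self_eq {A : Finset H} (hA : A * A = A) : ¬IsAtomPow1 A :=
  fun ⟨h1, hne, hsplit⟩ => hne ((hsplit A A h1 h1 hA.symm).elim id id)

theorem list_prod_ne_one_of_isAtomPow1 {L : List (Finset H)} (hL : ∀ A ∈ L, IsAtomPow1 A)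
    (hne : L ≠ []) : L.prod ≠ {1} := by
  obtain ⟨B, L, rfl⟩ := List.exists_cons_of_ne_nil hne
  have hB := hL B List.mem_cons_self
  have hBsub : B ⊆ (B :: L).prod := by
    rw [List.prod_cons]
    exact Finset.subset_mul_left B (Finset.one_mem_list_prod fun A hA => (hL A (.tail B hA)).1)
  intro h
  exact hB.2.1 <|
    Finset.eq_singleton_iff_unique_mem.2 ⟨hB.1, fun b hb => by simpa [h] using hBsub hb⟩

end

theorem no_atomic_factorization_of_idempotent_or_involution {H : Type*} [Monoid H] [DecidableEq H]
    (x : H) (hx : x ≠ 1) (h : x ^ 2 = 1 ∨ x ^ 2 = x) :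
    (∀ L : List (Finset H), (∀ A ∈ L, IsAtomPow1 A) →
        L.prod ≠ ({(1 : H), x} : Finset H)) ∧
    (∀ Y Z : Finset H, (1 : H) ∈ Y → (1 : H) ∈ Z → Y ≠ {1} → Z ≠ {1} →
        ({(1 : H), x} : Finset H) = Y * Z →
        Y = ({(1 : H), x} : Finset H) ∧ Z = ({(1 : H), x} : Finset H)) := by
  have hpair := Finset.pair_mul_pair_eq_pair h
  refine ⟨fun L hL hprod => ?_,
    fun Y Z hY hZ hY1 hZ1 hYZ => Finset.eq_pair_of_mul_eq_pair hY hZ hY1 hZ1 hYZ.symm⟩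
  rcases L with _ | ⟨A, _ | ⟨B, L⟩⟩
  · rw [List.prod_nil] at hprod
    exact hx (Finset.mem_one.1 (hprod ▸ Finset.mem_insert_of_mem (Finset.mem_singleton_self x)))
  · rw [List.prod_singleton] at hprod
    exact not_isAtomPow1_of_mul_self_eq hpair (hprod ▸ hL A List.mem_cons_self)
  · have hA := hL A List.mem_cons_self
    have hBL : ∀ C ∈ B :: L, IsAtomPow1 C := fun C hC => hL C (.tail A hC)
    rw [List.prod_cons] at hprod
    obtain ⟨rfl, -⟩ := Finset.eq_pair_of_mul_eq_pair hA.1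
      (Finset.one_mem_list_prod fun C hC => (hBL C hC).1) hA.2.1
      (list_prod_ne_one_of_isAtomPow1 hBL (List.cons_ne_nil B L)) hprod
    exact not_isAtomPow1_of_mul_self_eq hpair hA
end

section
/- Let H be a monoid. The reduced power monoid P_{fin,1}(H) is atomic (every non-unit is a finite product of atoms) if and only if for every x ∈ H \ {1_H} one has x² ≠ 1_H and x² ≠ x. -/
open Pointwise

section Aux

variable {H : Type*} [Monoid H] [DecidableEq H]

lemma one_mem_listProd (L : List (Finset H)) (h : ∀ A ∈ L, (1 : H) ∈ A) :
    (1 : H) ∈ L.prod := by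
  induction L with
  | nil => simpa using Finset.one_mem_one
  | cons A L' ih =>
    rw [List.prod_cons]
    simpa using Finset.mul_mem_mul (h A List.mem_cons_self)
      (ih fun B hB => h B (List.mem_cons_of_mem _ hB))

lemma exists_pow_eq_one (cond : ∀ x : H, x ≠ 1 → x ^ 2 ≠ 1 ∧ x ^ 2 ≠ x)
    {z : H} (hz : z ≠ 1) {X : Finset H} (hpow : ∀ k : ℕ, z ^ k ∈ X) :
    ∃ e : ℕ, 1 ≤ e ∧ z ^ e = 1 := by
  obtain ⟨i, hi, j, hj, hij, hzij⟩ :=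
    Finset.exists_ne_map_eq_of_card_lt_of_maps_to
      (s := Finset.range (X.card + 1)) (t := X)
      (by simp) (fun k _ => hpow k)
  wlog hlt : i < j generalizing i j
  · exact this j hj i hi hij.symm hzij.symm (by omega)
  set d := j - i with hd
  have hd1 : 1 ≤ d := by omega
  have hbase : z ^ (i + d) = z ^ i := by
    rw [show i + d = j by omega]; exact hzij.symm
  have claim : ∀ m t : ℕ, z ^ (i + m + t * d) = z ^ (i + m) := by
    intro m t
    induction t with
    | zero => simp
    | succ t ih =>
      have h1 : i + m + (t + 1) * d = (i + m + t * d) + d := by ring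
      rw [h1, pow_add, ih, ← pow_add]
      have h2 : i + m + d = (i + d) + m := by ring
      rw [h2, pow_add, hbase, ← pow_add]
  set e := d * (i + 1) with he
  have hie' : i + 1 ≤ e := by
    calc i + 1 = 1 * (i + 1) := (one_mul _).symm
      _ ≤ d * (i + 1) := Nat.mul_le_mul_right _ hd1
      _ = e := he.symm
  have hie : i ≤ e := by omega
  have he1 : 1 ≤ e := by omega
  have hidem : z ^ e * z ^ e = z ^ e := by
    have h1 : e = i + (e - i) := by omega
    have h2 : e + e = i + (e - i) + (i + 1) * d := by
      have : e = (i + 1) * d := by rw [he]; ring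
      omega
    calc z ^ e * z ^ e = z ^ (e + e) := by rw [← pow_add]
      _ = z ^ (i + (e - i) + (i + 1) * d) := by rw [h2]
      _ = z ^ (i + (e - i)) := claim _ _
      _ = z ^ e := by rw [← h1]
  by_cases hze : z ^ e = 1
  · exact ⟨e, he1, hze⟩
  · exact absurd (by rw [pow_two]; exact hidem) (cond (z ^ e) hze).2

lemma refactor_right (cond : ∀ x : H, x ≠ 1 → x ^ 2 ≠ 1 ∧ x ^ 2 ≠ x)
    {X : Finset H} {z : H} (hX1 : (1 : H) ∈ X) (hz : z ≠ 1)
    (habs : ∀ a ∈ X, a * z ∈ X) :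
    ∃ Y : Finset H, (1 : H) ∈ Y ∧ Y ≠ {1} ∧ Y.card < X.card ∧
      Y * ({1, z} : Finset H) = X ∧ 2 < X.card := by
  have hpow : ∀ k : ℕ, z ^ k ∈ X := by
    intro k
    induction k with
    | zero => simpa using hX1
    | succ k ih => rw [pow_succ]; exact habs _ ih
  obtain ⟨e, he1, hze⟩ := exists_pow_eq_one cond hz hpow
  have hzz1 : z * z ≠ 1 := by
    have := (cond z hz).1; rwa [pow_two] at this
  have hzzz : z * z ≠ z := by
    have := (cond z hz).2; rwa [pow_two] at this
  -- z is right-cancellable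
  have hsplit : z * z ^ (e - 1) = 1 := by
    rw [← pow_succ', show e - 1 + 1 = e from by omega, hze]
  have hinj : Function.Injective (fun a : H => a * z) := by
    intro a b hab
    dsimp only at hab
    have h : ∀ c : H, c = c * z * z ^ (e - 1) := fun c => by
      rw [mul_assoc, hsplit, mul_one]
    rw [h a, h b, hab]
  have himg : X.image (fun a => a * z) = X := by
    apply Finset.eq_of_subset_of_card_le
    · intro x hx
      obtain ⟨a, ha, rfl⟩ := Finset.mem_image.mp hx
      exact habs a ha
    · rw [Finset.card_image_of_injective _ hinj]
  have hsurj : ∀ x ∈ X, ∃ a ∈ X, a * z = x := by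
    intro x hx
    rw [← himg] at hx
    obtain ⟨a, ha, hax⟩ := Finset.mem_image.mp hx
    exact ⟨a, ha, hax⟩
  have hzX : z ∈ X := by simpa using habs 1 hX1
  have hzzX : z * z ∈ X := habs z hzX
  refine ⟨X.erase z, ?_, ?_, ?_, ?_, ?_⟩
  · exact Finset.mem_erase.mpr ⟨fun h => hz h.symm, hX1⟩
  · intro h
    have : z * z ∈ X.erase z := Finset.mem_erase.mpr ⟨hzzz, hzzX⟩
    rw [h] at this
    exact hzz1 (Finset.mem_singleton.mp this)
  · exact Finset.card_erase_lt_of_mem hzX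
  · ext x
    constructor
    · intro hx
      obtain ⟨a, ha, b, hb, rfl⟩ := Finset.mem_mul.mp hx
      have haX : a ∈ X := Finset.mem_of_mem_erase ha
      rcases Finset.mem_insert.mp hb with rfl | hb
      · simpa using haX
      · rw [Finset.mem_singleton.mp hb]; exact habs a haX
    · intro hx
      by_cases hxz : x = z
      · rw [hxz]
        obtain ⟨a, haX, haz⟩ := hsurj z hzX
        have haz' : a ≠ z := by
          rintro rfl; exact hzzz haz
        exact Finset.mem_mul.mpr ⟨a, Finset.mem_erase.mpr ⟨haz', haX⟩, z,
          by simp, haz⟩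
      · exact Finset.mem_mul.mpr ⟨x, Finset.mem_erase.mpr ⟨hxz, hx⟩, 1,
          by simp, mul_one x⟩
  · have hsub : ({1, z, z * z} : Finset H) ⊆ X := by
      intro a ha
      rcases Finset.mem_insert.mp ha with rfl | ha
      · exact hX1
      rcases Finset.mem_insert.mp ha with rfl | ha
      · exact hzX
      · rw [Finset.mem_singleton.mp ha]; exact hzzX
    have hcard : ({1, z, z * z} : Finset H).card = 3 := by
      have h1 : (1 : H) ∉ ({z, z * z} : Finset H) := by
        simp only [Finset.mem_insert, Finset.mem_singleton]
        push_neg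
        exact ⟨fun h => hz h.symm, fun h => hzz1 h.symm⟩
      have h2 : z ∉ ({z * z} : Finset H) := by
        simp only [Finset.mem_singleton]
        exact fun h => hzzz h.symm
      rw [Finset.card_insert_of_notMem h1, Finset.card_insert_of_notMem h2,
        Finset.card_singleton]
    have := Finset.card_le_card hsub
    omega

lemma refactor_left (cond : ∀ x : H, x ≠ 1 → x ^ 2 ≠ 1 ∧ x ^ 2 ≠ x)
    {X : Finset H} {z : H} (hX1 : (1 : H) ∈ X) (hz : z ≠ 1)
    (habs : ∀ a ∈ X, z * a ∈ X) :
    ∃ Y : Finset H, (1 : H) ∈ Y ∧ Y ≠ {1} ∧ Y.card < X.card ∧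
      ({1, z} : Finset H) * Y = X ∧ 2 < X.card := by
  have hpow : ∀ k : ℕ, z ^ k ∈ X := by
    intro k
    induction k with
    | zero => simpa using hX1
    | succ k ih => rw [pow_succ']; exact habs _ ih
  obtain ⟨e, he1, hze⟩ := exists_pow_eq_one cond hz hpow
  have hzz1 : z * z ≠ 1 := by
    have := (cond z hz).1; rwa [pow_two] at this
  have hzzz : z * z ≠ z := by
    have := (cond z hz).2; rwa [pow_two] at this
  have hsplit : z ^ (e - 1) * z = 1 := by
    rw [← pow_succ, show e - 1 + 1 = e from by omega, hze]
  have hinj : Function.Injective (fun a : H => z * a) := by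
    intro a b hab
    dsimp only at hab
    have h : ∀ c : H, c = z ^ (e - 1) * (z * c) := fun c => by
      rw [← mul_assoc, hsplit, one_mul]
    rw [h a, h b, hab]
  have himg : X.image (fun a => z * a) = X := by
    apply Finset.eq_of_subset_of_card_le
    · intro x hx
      obtain ⟨a, ha, rfl⟩ := Finset.mem_image.mp hx
      exact habs a ha
    · rw [Finset.card_image_of_injective _ hinj]
  have hsurj : ∀ x ∈ X, ∃ a ∈ X, z * a = x := by
    intro x hx
    rw [← himg] at hx
    obtain ⟨a, ha, hax⟩ := Finset.mem_image.mp hx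
    exact ⟨a, ha, hax⟩
  have hzX : z ∈ X := by simpa using habs 1 hX1
  have hzzX : z * z ∈ X := habs z hzX
  refine ⟨X.erase z, ?_, ?_, ?_, ?_, ?_⟩
  · exact Finset.mem_erase.mpr ⟨fun h => hz h.symm, hX1⟩
  · intro h
    have : z * z ∈ X.erase z := Finset.mem_erase.mpr ⟨hzzz, hzzX⟩
    rw [h] at this
    exact hzz1 (Finset.mem_singleton.mp this)
  · exact Finset.card_erase_lt_of_mem hzX
  · ext x
    constructor
    · intro hx
      obtain ⟨a, ha, b, hb, rfl⟩ := Finset.mem_mul.mp hx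
      have hbX : b ∈ X := Finset.mem_of_mem_erase hb
      rcases Finset.mem_insert.mp ha with rfl | ha
      · simpa using hbX
      · rw [Finset.mem_singleton.mp ha]; exact habs b hbX
    · intro hx
      by_cases hxz : x = z
      · rw [hxz]
        obtain ⟨a, haX, haz⟩ := hsurj z hzX
        have haz' : a ≠ z := by
          rintro rfl; exact hzzz haz
        exact Finset.mem_mul.mpr ⟨z, by simp, a,
          Finset.mem_erase.mpr ⟨haz', haX⟩, haz⟩
      · exact Finset.mem_mul.mpr ⟨1, by simp, x,
          Finset.mem_erase.mpr ⟨hxz, hx⟩, one_mul x⟩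
  · have hsub : ({1, z, z * z} : Finset H) ⊆ X := by
      intro a ha
      rcases Finset.mem_insert.mp ha with rfl | ha
      · exact hX1
      rcases Finset.mem_insert.mp ha with rfl | ha
      · exact hzX
      · rw [Finset.mem_singleton.mp ha]; exact hzzX
    have hcard : ({1, z, z * z} : Finset H).card = 3 := by
      have h1 : (1 : H) ∉ ({z, z * z} : Finset H) := by
        simp only [Finset.mem_insert, Finset.mem_singleton]
        push_neg
        exact ⟨fun h => hz h.symm, fun h => hzz1 h.symm⟩
      have h2 : z ∉ ({z * z} : Finset H) := by
        simp only [Finset.mem_singleton]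
        exact fun h => hzzz h.symm
      rw [Finset.card_insert_of_notMem h1, Finset.card_insert_of_notMem h2,
        Finset.card_singleton]
    have := Finset.card_le_card hsub
    omega

lemma atomic_of_cond (cond : ∀ x : H, x ≠ 1 → x ^ 2 ≠ 1 ∧ x ^ 2 ≠ x) :
    ∀ n (X : Finset H), X.card ≤ n → (1 : H) ∈ X → X ≠ {1} →
      ∃ L : List (Finset H), (∀ A ∈ L, IsAtomPow1 A) ∧ L.prod = X := by
  intro n
  induction n with
  | zero =>
    intro X hc h1 _
    exact absurd (Finset.card_pos.mpr ⟨1, h1⟩) (by omega)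
  | succ n IH =>
    intro X hc h1 hne
    by_cases hat : IsAtomPow1 X
    · exact ⟨[X], by simpa using hat, by simp⟩
    have h3 : ¬ ∀ Y Z : Finset H, (1 : H) ∈ Y → (1 : H) ∈ Z → X = Y * Z →
        Y = {1} ∨ Z = {1} := fun h => hat ⟨h1, hne, h⟩
    push_neg at h3
    obtain ⟨Y, Z, hY1, hZ1, hXYZ, hYne, hZne⟩ := h3
    have hYsub : Y ⊆ X := hXYZ ▸ Finset.subset_mul_left Y hZ1
    have hZsub : Z ⊆ X := hXYZ ▸ Finset.subset_mul_right Z hY1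
    have hXcard : 0 < X.card := Finset.card_pos.mpr ⟨1, h1⟩
    by_cases hYX : Y = X
    · -- X = X * Z : right-absorbing
      have hXX : X * Z = X := by rw [hYX] at hXYZ; exact hXYZ.symm
      have hzex : ∃ z ∈ Z, z ≠ 1 := by
        by_contra hcon
        push_neg at hcon
        exact hZne (Finset.eq_singleton_iff_unique_mem.mpr ⟨hZ1, hcon⟩)
      obtain ⟨z, hzZ, hz⟩ := hzex
      have habs : ∀ a ∈ X, a * z ∈ X := fun a ha =>
        hXX ▸ Finset.mul_mem_mul ha hzZ
      obtain ⟨Y', hY'1, hY'ne, hY'card, hfac, hX3⟩ := refactor_right cond h1 hz habs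
      have hzne : ({1, z} : Finset H) ≠ {1} := by
        intro h
        have : z ∈ ({1} : Finset H) := h ▸ (by simp : z ∈ ({1, z} : Finset H))
        exact hz (Finset.mem_singleton.mp this)
      obtain ⟨L1, hL1a, hL1p⟩ := IH Y' (by omega) hY'1 hY'ne
      obtain ⟨L2, hL2a, hL2p⟩ := IH {1, z}
        (le_trans (Finset.card_insert_le _ _) (by simp; omega)) (by simp) hzne
      refine ⟨L1 ++ L2, ?_, ?_⟩
      · intro A hA
        rcases List.mem_append.mp hA with h | h
        exacts [hL1a A h, hL2a A h]
      · rw [List.prod_append, hL1p, hL2p, hfac]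
    by_cases hZX : Z = X
    · -- X = Y * X : left-absorbing
      have hXX : Y * X = X := by rw [hZX] at hXYZ; exact hXYZ.symm
      have hzex : ∃ z ∈ Y, z ≠ 1 := by
        by_contra hcon
        push_neg at hcon
        exact hYne (Finset.eq_singleton_iff_unique_mem.mpr ⟨hY1, hcon⟩)
      obtain ⟨z, hzY, hz⟩ := hzex
      have habs : ∀ a ∈ X, z * a ∈ X := fun a ha =>
        hXX ▸ Finset.mul_mem_mul hzY ha
      obtain ⟨Y', hY'1, hY'ne, hY'card, hfac, hX3⟩ := refactor_left cond h1 hz habs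
      have hzne : ({1, z} : Finset H) ≠ {1} := by
        intro h
        have : z ∈ ({1} : Finset H) := h ▸ (by simp : z ∈ ({1, z} : Finset H))
        exact hz (Finset.mem_singleton.mp this)
      obtain ⟨L1, hL1a, hL1p⟩ := IH {1, z}
        (le_trans (Finset.card_insert_le _ _) (by simp; omega)) (by simp) hzne
      obtain ⟨L2, hL2a, hL2p⟩ := IH Y' (by omega) hY'1 hY'ne
      refine ⟨L1 ++ L2, ?_, ?_⟩
      · intro A hA
        rcases List.mem_append.mp hA with h | h
        exacts [hL1a A h, hL2a A h]
      · rw [List.prod_append, hL1p, hL2p, hfac]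
    · -- both proper
      have hYc : Y.card ≤ n := by
        have := Finset.card_lt_card (lt_of_le_of_ne hYsub hYX)
        omega
      have hZc : Z.card ≤ n := by
        have := Finset.card_lt_card (lt_of_le_of_ne hZsub hZX)
        omega
      obtain ⟨L1, hL1a, hL1p⟩ := IH Y hYc hY1 hYne
      obtain ⟨L2, hL2a, hL2p⟩ := IH Z hZc hZ1 hZne
      refine ⟨L1 ++ L2, ?_, ?_⟩
      · intro A hA
        rcases List.mem_append.mp hA with h | h
        exacts [hL1a A h, hL2a A h]
      · rw [List.prod_append, hL1p, hL2p, hXYZ]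

end Aux

theorem reduced_power_monoid_atomic_iff {H : Type*} [Monoid H] [DecidableEq H] :
    (∀ X : Finset H, (1 : H) ∈ X → X ≠ {1} →
        ∃ L : List (Finset H), (∀ A ∈ L, IsAtomPow1 A) ∧ L.prod = X) ↔
      ∀ x : H, x ≠ 1 → x ^ 2 ≠ 1 ∧ x ^ 2 ≠ x := by
  constructor
  · intro hatomic x hx
    have key : ¬ (x * x = 1 ∨ x * x = x) := by
      intro h2
      set X : Finset H := {1, x} with hXdef
      have hX1 : (1 : H) ∈ X := by simp [hXdef]
      have hxX : x ∈ X := by simp [hXdef]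
      have hXne : X ≠ {1} := by
        intro h
        exact hx (Finset.mem_singleton.mp (h ▸ hxX))
      have hXX : X * X = X := by
        apply subset_antisymm
        · intro a ha
          obtain ⟨y, hy, w, hw, rfl⟩ := Finset.mem_mul.mp ha
          rcases Finset.mem_insert.mp hy with rfl | hy
          · rw [one_mul]; exact hw
          rw [Finset.mem_singleton.mp hy]
          rcases Finset.mem_insert.mp hw with rfl | hw
          · rw [mul_one]; exact hxX
          rw [Finset.mem_singleton.mp hw]
          rcases h2 with h2 | h2
          · rw [h2]; exact hX1
          · rw [h2]; exact hxX
        · exact Finset.subset_mul_left X hX1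
      obtain ⟨L, hLatom, hLprod⟩ := hatomic X hX1 hXne
      cases L with
      | nil =>
        rw [List.prod_nil] at hLprod
        exact hXne hLprod.symm
      | cons A L' =>
        have hA := hLatom A List.mem_cons_self
        have h1L' : (1 : H) ∈ L'.prod :=
          one_mem_listProd _ fun B hB => (hLatom B (List.mem_cons_of_mem _ hB)).1
        have hAsub : A ⊆ X := by
          rw [← hLprod, List.prod_cons]
          exact Finset.subset_mul_left A h1L'
        have hxA : x ∈ A := by
          by_contra hxA
          apply hA.2.1
          apply Finset.eq_singleton_iff_unique_mem.mpr
          refine ⟨hA.1, fun a ha => ?_⟩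
          rcases Finset.mem_insert.mp (hAsub ha) with rfl | ha'
          · rfl
          · exact absurd (Finset.mem_singleton.mp ha' ▸ ha) hxA
        have hAX : A = X := by
          apply subset_antisymm hAsub
          intro a ha
          rcases Finset.mem_insert.mp ha with rfl | ha'
          · exact hA.1
          · rw [Finset.mem_singleton.mp ha']; exact hxA
        rcases hA.2.2 X X hX1 hX1 (hAX.trans hXX.symm) with h | h <;>
          exact hXne h
    rw [pow_two]
    push_neg at key
    exact key
  · intro cond X hX1 hXne
    exact atomic_of_cond cond X.card X le_rfl hX1 hXne
end

section
/- Let H be a monoid and x ∈ H an element of finite odd order m ≥ 3 with x^m = 1_H. Then for every n ≥ m, the subgroup X = {x^k : k ∈ ℕ} = ⟨x⟩ equals the setwise product of n copies of {1_H, x}. Consequently the set of factorization lengths of X in P_{fin,1}(H) contains all integers n ≥ m. -/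
open Pointwise

/-!
Multiplying by `{1, x}` either keeps an exponent or raises it by one, so `{1, x} ^ n` is the set
of powers `x ^ k` with `k ≤ n`. Once `n ≥ m`, every residue modulo `m` occurs among these `k`, and
`x ^ m = 1` identifies `x ^ k` with `x ^ (k % m)`.
-/

namespace Finset

variable {H : Type*} [Monoid H] [DecidableEq H]

theorem pair_one_pow_eq_image_range (x : H) (n : ℕ) :
    ({1, x} : Finset H) ^ n = (range (n + 1)).image (x ^ ·) := by
  induction n with
  | zero => simp only [pow_zero, zero_add, range_one, image_singleton]; rfl
  | succ n ih =>
    ext a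
    simp only [pow_succ, ih, mem_mul, mem_image, mem_range, mem_insert, mem_singleton]
    constructor
    · rintro ⟨_, ⟨k, hk, rfl⟩, c, rfl | rfl, rfl⟩
      · exact ⟨k, by omega, (mul_one _).symm⟩
      · exact ⟨k + 1, by omega, pow_succ _ k⟩
    · rintro ⟨k, hk, rfl⟩
      rcases Nat.lt_succ_iff_lt_or_eq.mp hk with hk | rfl
      · exact ⟨x ^ k, ⟨k, hk, rfl⟩, 1, Or.inl rfl, mul_one _⟩
      · exact ⟨x ^ n, ⟨n, n.lt_succ_self, rfl⟩, x, Or.inr rfl, (pow_succ x n).symm⟩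

theorem image_pow_range_eq_of_pow_eq_one {x : H} {m N : ℕ} (hm : 0 < m) (hxm : x ^ m = 1)
    (hN : m ≤ N) : (range N).image (x ^ ·) = (range m).image (x ^ ·) := by
  ext a
  simp only [mem_image, mem_range]
  constructor
  · rintro ⟨k, -, rfl⟩
    exact ⟨k % m, Nat.mod_lt k hm, (pow_eq_pow_mod k hxm).symm⟩
  · rintro ⟨k, hk, rfl⟩
    exact ⟨k, hk.trans_le hN, rfl⟩

end Finset

theorem pow_of_pair_eq_cyclic_general {H : Type*} [Monoid H] [DecidableEq H]
    (x : H) (m : ℕ) (hm : 3 ≤ m) (hxm : x ^ m = 1) :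
    ∀ n : ℕ, m ≤ n →
      ({(1 : H), x} : Finset H) ^ n = (Finset.range m).image (fun k => x ^ k) := by
  intro n hn
  rw [Finset.pair_one_pow_eq_image_range]
  exact Finset.image_pow_range_eq_of_pow_eq_one (by omega) hxm (by omega)

theorem pow_of_pair_eq_cyclic {H : Type*} [Monoid H] [DecidableEq H]
    (x : H) (m : ℕ) (hm : 3 ≤ m) (hodd : Odd m) (hxm : x ^ m = 1) :
    ∀ n : ℕ, m ≤ n →
      ({(1 : H), x} : Finset H) ^ n = (Finset.range m).image (fun k => x ^ k) :=
  pow_of_pair_eq_cyclic_general x m hm hxm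
end

section
/- Let H be a torsion-free monoid (every non-identity element has infinite order, i.e., all powers x, x², x³, ... are pairwise distinct and distinct from 1_H) and let X be a finite subset of H with 1_H ∈ X. If X = A_1 ⋯ A_ℓ for atoms A_1, ..., A_ℓ of P_{fin,1}(H), then ℓ ≤ |X|² − |X|. -/
open Pointwise

/-!
Pick in every atom `A_i` an element `a_i ≠ 1`. Since every atom contains `1`, the product
`X = A_1 ⋯ A_ℓ` contains `a^0, a^1, …, a^k` whenever `a` is picked `k` times; these powers are
pairwise distinct by torsion-freeness, so `k ≤ |X| - 1`. The picks themselves lie in `X \ {1}`,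
so at most `|X| - 1` distinct elements are picked, and `ℓ ≤ (|X| - 1)² ≤ |X|² - |X|`.
-/

lemma IsAtomPow1.exists_ne_one {H : Type*} [Monoid H] [DecidableEq H] {A : Finset H}
    (hA : IsAtomPow1 A) : ∃ a ∈ A, a ≠ 1 := by
  by_contra! h
  exact hA.2.1 (Finset.eq_singleton_iff_unique_mem.2 ⟨hA.1, h⟩)

namespace Finset

variable {M : Type*} [Monoid M] [DecidableEq M]

lemma list_prod_subset_of_sublist {L L' : List (Finset M)} (h : L'.Sublist L)
    (h1 : ∀ A ∈ L, (1 : M) ∈ A) : L'.prod ⊆ L.prod :=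
  h.prod_le_prod' fun A hA => one_subset.2 (h1 A hA)

lemma pow_length_mem_list_prod {L : List (Finset M)} {a : M} (ha : ∀ A ∈ L, a ∈ A) :
    a ^ L.length ∈ L.prod :=
  List.pow_card_le_prod L {a} (fun A hA => singleton_subset_iff.2 (ha A hA))
    (pow_mem_pow (mem_singleton_self a))

lemma pow_mem_list_prod_of_le_count {L : List (Finset M)} (h1 : ∀ A ∈ L, (1 : M) ∈ A)
    {f : Finset M → M} (hf : ∀ A ∈ L, f A ∈ A) {a : M} {j : ℕ}
    (hj : j ≤ (L.map f).count a) : a ^ j ∈ L.prod := by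
  set L' := (L.filter fun A => f A = a).take j
  have hlen : L'.length = j := by
    have hcount : (L.map f).count a = (L.filter fun A => f A = a).length := by
      rw [List.count_eq_countP, List.countP_map, List.countP_eq_length_filter]
      rfl
    simp only [L', List.length_take]
    omega
  have hsub : L'.Sublist L := (List.take_sublist _ _).trans List.filter_sublist
  rw [← hlen]
  refine list_prod_subset_of_sublist hsub h1 (pow_length_mem_list_prod fun A hA => ?_)
  have hA' := List.mem_of_mem_take hA
  simp only [List.mem_filter, decide_eq_true_eq] at hA'
  exact hA'.2 ▸ hf A hA'.1

end Finset

lemma Finset.lt_card_of_pow_mem {M : Type*} [Monoid M] {a : M}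
    (hinj : ∀ i j : ℕ, a ^ i = a ^ j → i = j) {X : Finset M} {n : ℕ}
    (h : ∀ j ≤ n, a ^ j ∈ X) : n < X.card := by
  have := Finset.card_le_card_of_injOn (fun j => a ^ j) (s := Finset.range (n + 1))
    (fun j hj => h j (Nat.lt_succ_iff.1 (Finset.mem_range.1 hj))) fun i _ j _ => hinj i j
  simpa using this

lemma List.length_le_card_toFinset_mul {α : Type*} [DecidableEq α] {l : List α} {k : ℕ}
    (h : ∀ a ∈ l, l.count a ≤ k) : l.length ≤ l.toFinset.card * k := by
  rw [← List.sum_toFinset_count_eq_length]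
  simpa using Finset.sum_le_card_nsmul _ _ k fun a ha => h a (List.mem_toFinset.1 ha)

lemma Nat.sub_one_mul_sub_one_le (n : ℕ) : (n - 1) * (n - 1) ≤ n ^ 2 - n := by
  rw [sq, ← Nat.mul_sub_one]
  exact Nat.mul_le_mul_right _ (Nat.sub_le n 1)

theorem length_bound_of_torsion_free {H : Type*} [Monoid H] [DecidableEq H]
    (htf : ∀ x : H, x ≠ 1 → ∀ i j : ℕ, x ^ i = x ^ j → i = j)
    (X : Finset H) (hX : (1 : H) ∈ X)
    (L : List (Finset H)) (hL : ∀ A ∈ L, IsAtomPow1 A) (hprod : L.prod = X) :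
    L.length ≤ X.card ^ 2 - X.card := by
  choose! f hfA hf1 using fun A hA => (hL A hA).exists_ne_one
  have hpow : ∀ a j, j ≤ (L.map f).count a → a ^ j ∈ X := fun a j hj =>
    hprod ▸ Finset.pow_mem_list_prod_of_le_count (fun A hA => (hL A hA).1) hfA hj
  have hcount : ∀ a ∈ L.map f, (L.map f).count a ≤ X.card - 1 := by
    intro a ha
    obtain ⟨A, hA, rfl⟩ := List.mem_map.1 ha
    have := Finset.lt_card_of_pow_mem (htf _ (hf1 A hA)) (hpow (f A))
    omega
  have hpicks : (L.map f).toFinset.card ≤ X.card - 1 := by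
    rw [← Finset.card_erase_of_mem hX]
    refine Finset.card_le_card fun a ha => ?_
    have ha := List.mem_toFinset.1 ha
    obtain ⟨A, hA, rfl⟩ := List.mem_map.1 ha
    exact Finset.mem_erase.2 ⟨hf1 A hA, by simpa using hpow _ 1 (List.count_pos_iff.2 ha)⟩
  calc L.length = (L.map f).length := (List.length_map f).symm
    _ ≤ (L.map f).toFinset.card * (X.card - 1) := List.length_le_card_toFinset_mul hcount
    _ ≤ (X.card - 1) * (X.card - 1) := Nat.mul_le_mul_right _ hpicks
    _ ≤ X.card ^ 2 - X.card := Nat.sub_one_mul_sub_one_le _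
end

section
/- Let H be a monoid and X a finite subset of H containing 1_H. Suppose X = A_1 ⋯ A_n where A_1, ..., A_n are atoms of P_{fin,1}(H), and suppose the factorization is minimal in the sense that no proper (ordered) subfamily of (A_1, ..., A_n) has setwise product equal to X. Then n ≤ |X| − 1. -/
open Pointwise

theorem minimal_factorization_length_bound {H : Type*} [Monoid H] [DecidableEq H]
    (X : Finset H) (hX : (1 : H) ∈ X)
    (L : List (Finset H)) (hL : ∀ A ∈ L, IsAtomPow1 A) (hprod : L.prod = X)
    (hmin : ∀ L' : List (Finset H), L'.Sublist L → L'.prod = X → L' = L) :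
    L.length ≤ X.card - 1 := by
  have key : ∀ i, i ≤ L.length → i + 1 ≤ ((L.take i).prod : Finset H).card := by
    intro i hi
    induction i with
    | zero => simp
    | succ j ih =>
      have hjlt : j < L.length := hi
      have hA := hL (L.get ⟨j, hjlt⟩) (L.get_mem _)
      have h1A : (1 : H) ∈ L.get ⟨j, hjlt⟩ := hA.1
      have htake : L.take (j + 1) = L.take j ++ [L.get ⟨j, hjlt⟩] := by
        rw [List.take_succ]
        simp [List.getElem?_eq_getElem hjlt, List.get_eq_getElem]
      have hPsub : (L.take j).prod ⊆ (L.take (j + 1)).prod := by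
        rw [htake, List.prod_append, List.prod_singleton]
        exact Finset.subset_mul_left _ h1A
      have hne : (L.take j).prod ≠ (L.take (j + 1)).prod := by
        intro heq
        have hdropsub : (L.drop (j + 1)).Sublist (L.drop j) := by
          have : L.drop (j + 1) = (L.drop j).drop 1 := by
            rw [List.drop_drop]
          rw [this]
          exact List.drop_sublist 1 _
        have hsub : (L.take j ++ L.drop (j + 1)).Sublist L := by
          conv_rhs => rw [← List.take_append_drop j L]
          exact hdropsub.append_left _
        have hprodeq : (L.take j ++ L.drop (j + 1)).prod = X := by
          rw [List.prod_append, heq]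
          rw [← List.prod_append, List.take_append_drop, hprod]
        have := hmin _ hsub hprodeq
        have hlen := congrArg List.length this
        simp [List.length_take, List.length_drop] at hlen
        omega
      have hlt : (L.take j).prod.card < (L.take (j + 1)).prod.card :=
        Finset.card_lt_card (hPsub.ssubset_of_ne hne)
      have := ih (Nat.le_of_succ_le hi)
      omega
  have hfinal := key L.length le_rfl
  rw [List.take_length, hprod] at hfinal
  omega
end

section
/- Let n ≥ 2 and let A_1, ..., A_ℓ be finite subsets of ℤ/nℤ, each containing 0 and each not equal to {0}, with A_1 + ⋯ + A_ℓ = X. For a subset S ⊆ ℤ/nℤ, let Ŝ ⊆ {0, ..., n−1} be the set of least non-negative representatives, and suppose max Â_1 + ⋯ + max Â_ℓ = max X̂. Then for every proper subset K ⊊ {1,...,ℓ}, the sumset ∑_{k∈K} A_k is a proper subset of X. -/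
open Pointwise

theorem zero_mem_finset_sum {n ℓ : ℕ} (A : Fin ℓ → Finset (ZMod n))
    (hA : ∀ i, (0 : ZMod n) ∈ A i) (K : Finset (Fin ℓ)) :
    (0 : ZMod n) ∈ ∑ i ∈ K, A i := by
  classical
  induction K using Finset.induction_on with
  | empty => simp
  | insert _ _ h ih =>
    rw [Finset.sum_insert h]
    simpa using Finset.add_mem_add (hA _) ih

theorem sup_val_sum_le {n ℓ : ℕ} [NeZero n] (A : Fin ℓ → Finset (ZMod n))
    (K : Finset (Fin ℓ)) :
    (∑ i ∈ K, A i).sup ZMod.val ≤ ∑ i ∈ K, (A i).sup ZMod.val := by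
  classical
  induction K using Finset.induction_on with
  | empty => simp
  | insert _ _ h ih =>
    rw [Finset.sum_insert h, Finset.sum_insert h]
    refine Finset.sup_le fun x hx => ?_
    rw [Finset.mem_add] at hx
    obtain ⟨a, ha, b, hb, rfl⟩ := hx
    calc (a + b).val ≤ a.val + b.val := ZMod.val_add_le a b
      _ ≤ _ := Nat.add_le_add (Finset.le_sup ha) (le_trans (Finset.le_sup hb) ih)

theorem NR_factorization_is_minimal (n : ℕ) (hn : 2 ≤ n)
    (ℓ : ℕ) (A : Fin ℓ → Finset (ZMod n))
    (hA : ∀ i, (0 : ZMod n) ∈ A i ∧ A i ≠ {0})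
    (X : Finset (ZMod n)) (hX : ∑ i, A i = X)
    (hNR : ∑ i, (A i).sup ZMod.val = X.sup ZMod.val) :
    ∀ K : Finset (Fin ℓ), K ≠ Finset.univ → (∑ i ∈ K, A i) ⊂ X := by
  classical
  haveI : NeZero n := ⟨by omega⟩
  intro K hK
  have hsub : (∑ i ∈ K, A i) ⊆ X := by
    rw [← hX, ← Finset.sum_add_sum_compl K A]
    exact Finset.subset_add_left _ (zero_mem_finset_sum A (fun i => (hA i).1) _)
  refine ⟨hsub, fun hsub' => ?_⟩
  have heq : (∑ i ∈ K, A i) = X := Finset.Subset.antisymm hsub hsub'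
  obtain ⟨j, hj⟩ : ∃ j, j ∉ K := by
    by_contra h
    push_neg at h
    exact hK (Finset.eq_univ_iff_forall.2 h)
  -- positive sup for A j
  have hjpos : 0 < (A j).sup ZMod.val := by
    obtain ⟨a, ha, hane⟩ : ∃ a ∈ A j, a ≠ 0 := by
      by_contra h
      push_neg at h
      exact (hA j).2 (Finset.eq_singleton_iff_unique_mem.2 ⟨(hA j).1, h⟩)
    exact lt_of_lt_of_le (ZMod.val_pos.2 hane) (Finset.le_sup ha)
  have h1 : X.sup ZMod.val ≤ ∑ i ∈ K, (A i).sup ZMod.val := by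
    rw [← heq]; exact sup_val_sum_le A K
  have h2 : ∑ i ∈ K, (A i).sup ZMod.val < ∑ i, (A i).sup ZMod.val := by
    rw [← Finset.sum_add_sum_compl K fun i => (A i).sup ZMod.val]
    have : 0 < ∑ i ∈ Kᶜ, (A i).sup ZMod.val :=
      Finset.sum_pos' (fun _ _ => Nat.zero_le _) ⟨j, Finset.mem_compl.2 hj, hjpos⟩
    omega
  omega
end

section
/- Let n ≥ 5 be odd and let h ∈ [1, (n−1)/2] be odd. Then the set B_h = {0̄} ∪ {1̄, 3̄, 5̄, ..., h̄} ⊆ ℤ/nℤ is an atom of the reduced power monoid P_{fin,0}(ℤ/nℤ): whenever B_h = X + Y with 0 ∈ X, 0 ∈ Y, one of X, Y equals {0̄}. -/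
/-!
Every element of `B_h` other than `0` is the residue of an odd number `k ≤ h`. If `B_h = X + Y`
with `0 ∈ X ∩ Y` and both factors nontrivial, then `X, Y ⊆ B_h`, so there are odd `k, m ≤ h` with
`k̄ ∈ X`, `m̄ ∈ Y`, and `k̄ + m̄ ∈ B_h`. But `k + m` is even and lies in `[2, 2h] ⊆ [2, n - 1]`,
so its residue is neither `0̄` nor the residue of an odd number `≤ h`.
-/

open Pointwise

section SumsetAtom

variable {α : Type*} [DecidableEq α] [AddZeroClass α]

def IsSumsetAtom (B : Finset α) : Prop :=
  B ≠ {0} ∧ ∀ X Y : Finset α, (0 : α) ∈ X → (0 : α) ∈ Y → B = X + Y → X = {0} ∨ Y = {0}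

theorem eq_zero_or_eq_zero_of_zero_union_eq_add {S X Y : Finset α}
    (hS : ∀ a ∈ S, ∀ b ∈ S, a + b ∉ {0} ∪ S) (hX : (0 : α) ∈ X) (hY : (0 : α) ∈ Y)
    (hXY : {0} ∪ S = X + Y) {x y : α} (hx : x ∈ X) (hy : y ∈ Y) : x = 0 ∨ y = 0 := by
  have mem_S_of_ne_zero {z : α} (hz : z ∈ X + Y) (hz0 : z ≠ 0) : z ∈ S := by
    rw [← hXY, Finset.mem_union, Finset.mem_singleton] at hz
    exact hz.resolve_left hz0
  by_contra! hxy
  have hxS := mem_S_of_ne_zero (Finset.subset_add_left X hY hx) hxy.1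
  have hyS := mem_S_of_ne_zero (Finset.subset_add_right Y hX hy) hxy.2
  exact hS x hxS y hyS (hXY ▸ Finset.add_mem_add hx hy)

theorem isSumsetAtom_zero_union {S : Finset α} (hne : S.Nonempty)
    (hS : ∀ a ∈ S, ∀ b ∈ S, a + b ∉ {0} ∪ S) : IsSumsetAtom ({0} ∪ S) := by
  refine ⟨fun h0 => ?_, fun X Y hX hY hXY => ?_⟩
  · obtain ⟨a, ha⟩ := hne
    have ha0 : a = 0 := Finset.mem_singleton.mp (h0 ▸ Finset.mem_union_right _ ha)
    exact hS a ha a ha (by simp [h0, ha0])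
  · by_cases hXzero : ∀ x ∈ X, x = 0
    · exact Or.inl (Finset.eq_singleton_iff_unique_mem.mpr ⟨hX, hXzero⟩)
    · obtain ⟨x, hx, hx0⟩ := not_forall₂.mp hXzero
      refine Or.inr (Finset.eq_singleton_iff_unique_mem.mpr ⟨hY, fun y hy => ?_⟩)
      exact (eq_zero_or_eq_zero_of_zero_union_eq_add hS hX hY hXY hx hy).resolve_left hx0

end SumsetAtom

def oddResidues (n h : ℕ) : Finset (ZMod n) :=
  ((Finset.range (h + 1)).filter Odd).image (fun k : ℕ => (k : ZMod n))

theorem mem_oddResidues {n h : ℕ} {a : ZMod n} :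
    a ∈ oddResidues n h ↔ ∃ k, k ≤ h ∧ Odd k ∧ (k : ZMod n) = a := by
  simp [oddResidues, and_assoc]

theorem add_not_mem_zero_union_oddResidues {n h : ℕ} (hn : 2 * h < n) :
    ∀ a ∈ oddResidues n h, ∀ b ∈ oddResidues n h, a + b ∉ {0} ∪ oddResidues n h := by
  intro a ha b hb hab
  obtain ⟨k, hkh, hk, rfl⟩ := mem_oddResidues.mp ha
  obtain ⟨m, hmh, hm, rfl⟩ := mem_oddResidues.mp hb
  rw [← Nat.cast_add] at hab
  have eq_of_cast_eq {i : ℕ} (hi : i < n) (hcast : ((k + m : ℕ) : ZMod n) = i) : k + m = i := by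
    simpa only [ZMod.val_cast_of_lt hi, ZMod.val_cast_of_lt (show k + m < n by omega)] using
      congrArg ZMod.val hcast
  rcases Finset.mem_union.mp hab with h0 | hS
  · have := eq_of_cast_eq (i := 0) (by omega) (by simpa using h0)
    have := hk.pos
    omega
  · obtain ⟨j, hjh, hj, hjc⟩ := mem_oddResidues.mp hS
    exact Nat.not_even_iff_odd.mpr hj (eq_of_cast_eq (by omega) hjc.symm ▸ hk.add_odd hm)

theorem Bh_is_atom_general (n : ℕ)
    (h : ℕ) (hh1 : 1 ≤ h) (hh2 : h ≤ (n - 1) / 2) :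
    let B : Finset (ZMod n) :=
      {0} ∪ (((Finset.range (h + 1)).filter (fun k => Odd k)).image
        (fun k : ℕ => (k : ZMod n)))
    B ≠ {0} ∧
      ∀ X Y : Finset (ZMod n), (0 : ZMod n) ∈ X → (0 : ZMod n) ∈ Y →
        B = X + Y → X = {0} ∨ Y = {0} := by
  have hne : (oddResidues n h).Nonempty := ⟨1, mem_oddResidues.mpr ⟨1, hh1, odd_one, Nat.cast_one⟩⟩
  exact isSumsetAtom_zero_union hne (add_not_mem_zero_union_oddResidues (by omega))

theorem Bh_is_atom (n : ℕ) (hn : 5 ≤ n) (hodd : Odd n)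
    (h : ℕ) (hh1 : 1 ≤ h) (hhodd : Odd h) (hh2 : h ≤ (n - 1) / 2) :
    let B : Finset (ZMod n) :=
      {0} ∪ (((Finset.range (h + 1)).filter (fun k => Odd k)).image
        (fun k : ℕ => (k : ZMod n)))
    B ≠ {0} ∧
      ∀ X Y : Finset (ZMod n), (0 : ZMod n) ∈ X → (0 : ZMod n) ∈ Y →
        B = X + Y → X = {0} ∨ Y = {0} :=
  Bh_is_atom_general n h hh1 hh2
end

section
/- Let n ≥ 5 be odd and let ℓ ∈ [5, (n−1)/2] be odd. Then the set C_ℓ = {0̄, 1̄, 3̄, ..., ℓ̄} ∪ {(ℓ+1)‾} ⊆ ℤ/nℤ is an atom of the reduced power monoid P_{fin,0}(ℤ/nℤ); the sets C_1 = {0̄, 2̄} and C_3 = {0̄, 2̄, 3̄, 4̄} are atoms as well. -/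
/-!
In every case some element `a` of the set (`a = 3`, or `a = 2` for `{0, 2}`) is not a sum of two
nonzero elements of the set: all representatives are small compared with `n`, so such a sum
cannot wrap around. Hence in a factorization `A = X + Y` one factor, say `X`, contains `a`, and
`a + Y ⊆ A`. For `{0, 2}` and `{0, 2, 3, 4}` this alone forces `Y = {0}`. For `C_ℓ` it forces
`Y ⊆ {0, ℓ - 2}`; if `ℓ - 2 ∈ Y`, then `X + (ℓ - 2) ⊆ C_ℓ` forces `X ⊆ {0, 3}`, and then
`X + Y ⊆ {0, 3, ℓ - 2, ℓ + 1}` misses `1 ∈ C_ℓ`.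
-/

open Pointwise

/-- `A` is an atom of the reduced power monoid `P_{fin,0}(ZMod n)`. -/
def IsAtomPow0 {n : ℕ} (A : Finset (ZMod n)) : Prop :=
  (0 : ZMod n) ∈ A ∧ A ≠ {0} ∧
    ∀ X Y : Finset (ZMod n), (0 : ZMod n) ∈ X → (0 : ZMod n) ∈ Y →
      A = X + Y → X = {0} ∨ Y = {0}

namespace ZMod

variable {n : ℕ} [NeZero n]

theorem val_add_eq_or_val_add_add_eq (a b : ZMod n) :
    (a + b).val = a.val + b.val ∨ (a + b).val + n = a.val + b.val := by
  rcases lt_or_ge (a.val + b.val) n with h | h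
  · exact .inl (val_add_of_lt h)
  · exact .inr (val_add_val_of_le h).symm

theorem eq_natCast_iff_val_eq {k : ℕ} (hk : k < n) (z : ZMod n) : z = k ↔ z.val = k := by
  rw [← (val_injective n).eq_iff, val_natCast_of_lt hk]

theorem eq_ofNat_iff_val_eq {k : ℕ} [k.AtLeastTwo] (hk : k < n) (z : ZMod n) :
    z = (ofNat(k) : ZMod n) ↔ z.val = ofNat(k) := by
  rw [← (val_injective n).eq_iff, val_ofNat_of_lt hk]

end ZMod

namespace IsAtomPow0

variable {n : ℕ} {A : Finset (ZMod n)}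

theorem of_indecomposable_mem (a : ZMod n) (h0 : 0 ∈ A) (ha : a ∈ A) (ha0 : a ≠ 0)
    (hdecomp : ∀ x ∈ A, ∀ y ∈ A, x + y = a → x = 0 ∨ y = 0)
    (htriv : ∀ X Y : Finset (ZMod n), 0 ∈ X → 0 ∈ Y → A = X + Y → a ∈ X → Y = {0}) :
    IsAtomPow0 A := by
  refine ⟨h0, fun h => ha0 (by simpa [h] using ha), fun X Y hX hY hA => ?_⟩
  have hXA : X ⊆ A := hA ▸ Finset.subset_add_left X hY
  have hYA : Y ⊆ A := hA ▸ Finset.subset_add_right Y hX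
  obtain ⟨x, hx, y, hy, hxy⟩ := Finset.mem_add.1 (hA ▸ ha)
  rcases hdecomp x (hXA hx) y (hYA hy) hxy with rfl | rfl
  · rw [zero_add] at hxy
    exact .inl (htriv Y X hY hX (hA.trans (add_comm X Y)) (hxy ▸ hy))
  · rw [add_zero] at hxy
    exact .inr (htriv X Y hX hY hA (hxy ▸ hx))

theorem of_add_mem (a : ZMod n) (h0 : 0 ∈ A) (ha : a ∈ A) (ha0 : a ≠ 0)
    (hdecomp : ∀ x ∈ A, ∀ y ∈ A, x + y = a → x = 0 ∨ y = 0)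
    (hadd : ∀ y ∈ A, a + y ∈ A → y = 0) : IsAtomPow0 A := by
  refine of_indecomposable_mem a h0 ha ha0 hdecomp fun X Y hX hY hA haX => ?_
  refine Finset.eq_singleton_iff_unique_mem.2 ⟨hY, fun y hy => hadd y ?_ ?_⟩
  · exact hA ▸ Finset.subset_add_right Y hX hy
  · exact hA ▸ Finset.add_mem_add haX hy

end IsAtomPow0

section SmallSets

variable {n : ℕ}

theorem isAtomPow0_zero_two (hn : 4 < n) : IsAtomPow0 ({0, 2} : Finset (ZMod n)) := by
  have : NeZero n := ⟨by omega⟩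
  have hmem (z : ZMod n) : z ∈ ({0, 2} : Finset (ZMod n)) ↔ z.val = 0 ∨ z.val = 2 := by
    simp only [Finset.mem_insert, Finset.mem_singleton, ← ZMod.val_eq_zero,
      ZMod.eq_ofNat_iff_val_eq (show 2 < n by omega)]
  have h2 : (2 : ZMod n).val = 2 := ZMod.val_ofNat_of_lt (show 2 < n by omega)
  refine .of_add_mem 2 (by simp) (by simp) ?_ (fun x hx y hy hxy => ?_) (fun y hy h2y => ?_)
  · rw [ne_eq, ← ZMod.val_eq_zero, h2]
    omega
  · have hsum := ZMod.val_add_eq_or_val_add_add_eq x y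
    rw [hxy, h2] at hsum
    rw [hmem] at hx hy
    simp only [← ZMod.val_eq_zero]
    omega
  · have hsum := ZMod.val_add_eq_or_val_add_add_eq 2 y
    rw [hmem] at hy h2y
    rw [← ZMod.val_eq_zero]
    omega

theorem isAtomPow0_zero_two_three_four (hn : 7 < n) :
    IsAtomPow0 ({0, 2, 3, 4} : Finset (ZMod n)) := by
  have : NeZero n := ⟨by omega⟩
  have hmem (z : ZMod n) : z ∈ ({0, 2, 3, 4} : Finset (ZMod n)) ↔
      z.val = 0 ∨ z.val = 2 ∨ z.val = 3 ∨ z.val = 4 := by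
    simp only [Finset.mem_insert, Finset.mem_singleton, ← ZMod.val_eq_zero,
      ZMod.eq_ofNat_iff_val_eq (show 2 < n by omega), ZMod.eq_ofNat_iff_val_eq (show 3 < n by omega),
      ZMod.eq_ofNat_iff_val_eq (show 4 < n by omega)]
  have h3 : (3 : ZMod n).val = 3 := ZMod.val_ofNat_of_lt (show 3 < n by omega)
  refine .of_add_mem 3 (by simp) (by simp) ?_ (fun x hx y hy hxy => ?_) (fun y hy h3y => ?_)
  · rw [ne_eq, ← ZMod.val_eq_zero, h3]
    omega
  · have hsum := ZMod.val_add_eq_or_val_add_add_eq x y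
    rw [hxy, h3] at hsum
    rw [hmem] at hx hy
    simp only [← ZMod.val_eq_zero]
    omega
  · have hsum := ZMod.val_add_eq_or_val_add_add_eq 3 y
    rw [hmem] at hy h3y
    rw [← ZMod.val_eq_zero]
    omega

end SmallSets

def Cl (n ℓ : ℕ) : Finset (ZMod n) :=
  {0} ∪ (((Finset.range (ℓ + 1)).filter (fun k => Odd k)).image (fun k : ℕ => (k : ZMod n))) ∪
    {((ℓ + 1 : ℕ) : ZMod n)}

namespace Cl

variable {n ℓ : ℕ}

theorem mem_iff [NeZero n] (h : ℓ + 1 < n) (z : ZMod n) :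
    z ∈ Cl n ℓ ↔ z.val = 0 ∨ (z.val % 2 = 1 ∧ z.val ≤ ℓ) ∨ z.val = ℓ + 1 := by
  have hodd : (∃ k, (k < ℓ + 1 ∧ Odd k) ∧ (k : ZMod n) = z) ↔ z.val % 2 = 1 ∧ z.val ≤ ℓ := by
    constructor
    · rintro ⟨k, ⟨hk, hkodd⟩, rfl⟩
      rw [ZMod.val_natCast_of_lt (by omega)]
      exact ⟨Nat.odd_iff.1 hkodd, by omega⟩
    · rintro ⟨hzodd, hzle⟩
      exact ⟨z.val, ⟨by omega, Nat.odd_iff.2 hzodd⟩, ZMod.natCast_zmod_val z⟩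
  simp only [Cl, Finset.mem_union, Finset.mem_singleton, Finset.mem_image, Finset.mem_filter,
    Finset.mem_range, ← ZMod.val_eq_zero, ZMod.eq_natCast_iff_val_eq h, hodd, or_assoc]

theorem eq_singleton_zero_of_three_mem (hl : 5 ≤ ℓ) (hn : 2 * ℓ < n) {X Y : Finset (ZMod n)}
    (hX : 0 ∈ X) (hY : 0 ∈ Y) (hA : Cl n ℓ = X + Y) (h3X : 3 ∈ X) : Y = {0} := by
  have : NeZero n := ⟨by omega⟩
  have hmem := mem_iff (n := n) (ℓ := ℓ) (by omega)
  have hXA : X ⊆ Cl n ℓ := hA ▸ Finset.subset_add_left X hY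
  have hYA : Y ⊆ Cl n ℓ := hA ▸ Finset.subset_add_right Y hX
  have hadd {x y : ZMod n} (hx : x ∈ X) (hy : y ∈ Y) : x + y ∈ Cl n ℓ :=
    hA ▸ Finset.add_mem_add hx hy
  have h3 : (3 : ZMod n).val = 3 := ZMod.val_ofNat_of_lt (show 3 < n by omega)
  have hYsub (y : ZMod n) (hy : y ∈ Y) : y.val = 0 ∨ y.val = ℓ - 2 := by
    have hy' := (hmem y).1 (hYA hy)
    have h3y := (hmem _).1 (hadd h3X hy)
    have hsum := ZMod.val_add_eq_or_val_add_add_eq 3 y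
    omega
  refine Finset.eq_singleton_iff_unique_mem.2 ⟨hY, fun y₀ hy₀ => ?_⟩
  by_contra hy₀0
  have hy₀val : y₀.val = ℓ - 2 :=
    (hYsub y₀ hy₀).resolve_left (by rwa [ZMod.val_eq_zero])
  have hXsub (x : ZMod n) (hx : x ∈ X) : x.val = 0 ∨ x.val = 3 := by
    have hx' := (hmem x).1 (hXA hx)
    have hy₀' := (hmem y₀).1 (hYA hy₀)
    have hxy₀ := (hmem _).1 (hadd hx hy₀)
    have hsum := ZMod.val_add_eq_or_val_add_add_eq x y₀
    omega
  have h1 : (1 : ZMod n).val = 1 := ZMod.val_one'' (by omega)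
  obtain ⟨x, hx, y, hy, hxy⟩ := Finset.mem_add.1 (hA ▸ (hmem 1).2 (by omega))
  have hsum := ZMod.val_add_eq_or_val_add_add_eq x y
  rw [hxy, h1] at hsum
  have := hXsub x hx
  have := hYsub y hy
  omega

theorem isAtomPow0 (hl : 5 ≤ ℓ) (hn : 2 * ℓ < n) : IsAtomPow0 (Cl n ℓ) := by
  have : NeZero n := ⟨by omega⟩
  have hmem := mem_iff (n := n) (ℓ := ℓ) (by omega)
  have h3 : (3 : ZMod n).val = 3 := ZMod.val_ofNat_of_lt (show 3 < n by omega)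
  refine .of_indecomposable_mem 3 ((hmem 0).2 (by simp)) ((hmem 3).2 (by omega)) ?_
    (fun x hx y hy hxy => ?_) (fun X Y hX hY hA h3X => eq_singleton_zero_of_three_mem hl hn hX hY hA h3X)
  · rw [ne_eq, ← ZMod.val_eq_zero, h3]
    omega
  · have hsum := ZMod.val_add_eq_or_val_add_add_eq x y
    rw [hxy, h3] at hsum
    rw [hmem] at hx hy
    simp only [← ZMod.val_eq_zero]
    omega

end Cl

theorem Cl_is_atom_general (n : ℕ) (ℓ : ℕ) (hl1 : 5 ≤ ℓ) (hl2 : ℓ ≤ (n - 1) / 2) :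
    IsAtomPow0 (({0} ∪ (((Finset.range (ℓ + 1)).filter (fun k => Odd k)).image
        (fun k : ℕ => (k : ZMod n))) ∪ {((ℓ + 1 : ℕ) : ZMod n)}) : Finset (ZMod n)) ∧
    IsAtomPow0 ({0, 2} : Finset (ZMod n)) ∧
    IsAtomPow0 ({0, 2, 3, 4} : Finset (ZMod n)) :=
  ⟨Cl.isAtomPow0 hl1 (by omega), isAtomPow0_zero_two (by omega),
    isAtomPow0_zero_two_three_four (by omega)⟩

theorem Cl_is_atom (n : ℕ) (hn : 5 ≤ n) (hodd : Odd n)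
    (ℓ : ℕ) (hl1 : 5 ≤ ℓ) (hlodd : Odd ℓ) (hl2 : ℓ ≤ (n - 1) / 2) :
    IsAtomPow0 (({0} ∪ (((Finset.range (ℓ + 1)).filter (fun k => Odd k)).image
        (fun k : ℕ => (k : ZMod n))) ∪ {((ℓ + 1 : ℕ) : ZMod n)}) : Finset (ZMod n)) ∧
    IsAtomPow0 ({0, 2} : Finset (ZMod n)) ∧
    IsAtomPow0 ({0, 2, 3, 4} : Finset (ZMod n)) :=
  Cl_is_atom_general n ℓ hl1 hl2
end
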